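/- Fix n, I, l with 1 ≤ I < l ≤ n. The symmetric n×n matrix M with M(i,l) = M(l,i) = 2 for I ≤ i ≤ l−1 and all other entries 0 (the c(I,l)-formation) is the CN matrix of some pure braid projection word on n strands. -/

import Mathlib

/-- Left position of a crossing letter, as an element of `Fin n`. -/
def posL (n : ℕ) (k : Fin (n - 1)) : Fin n := ⟨k.val, by have := k.isLt; omega⟩

/-- Right position of a crossing letter, as an element of `Fin n`. -/
def posR (n : ℕ) (k : Fin (n - 1)) : Fin n := ⟨k.val + 1, by have := k.isLt; omega⟩

/-- The transposition of positions induced by a crossing letter. -/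
def braidSwap (n : ℕ) (k : Fin (n - 1)) : Equiv.Perm (Fin n) :=
  Equiv.swap (posL n k) (posR n k)

/-- CN matrix of a braid projection word, scanning with position-to-strand
assignment `π`.  Each letter records one crossing between the two strand
labels currently at the involved positions (counted symmetrically). -/
def CNaux (n : ℕ) : Equiv.Perm (Fin n) → List (Fin (n - 1)) → Matrix (Fin n) (Fin n) ℕ
  | _, [] => 0
  | π, k :: w =>
      Matrix.single (π (posL n k)) (π (posR n k)) 1 +
      Matrix.single (π (posR n k)) (π (posL n k)) 1 +
      CNaux n (π * braidSwap n k) w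

/-- CN matrix of a braid projection word on `n` strands. -/
def CN (n : ℕ) (w : List (Fin (n - 1))) : Matrix (Fin n) (Fin n) ℕ := CNaux n 1 w

/-- Final position-to-strand assignment after scanning the word. -/
def finalPerm (n : ℕ) : Equiv.Perm (Fin n) → List (Fin (n - 1)) → Equiv.Perm (Fin n)
  | π, [] => π
  | π, k :: w => finalPerm n (π * braidSwap n k) w

/-- A braid projection word is pure if the induced permutation of strands
is the identity. -/
def IsPure (n : ℕ) (w : List (Fin (n - 1))) : Prop := finalPerm n 1 w = 1

/-- A zero-diagonal matrix is T0 if `i < j < k`, `M i j = 0` and `M j k = 0`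
imply `M i k = 0`. -/
def IsT0 {n : ℕ} {α : Type*} [Zero α] (M : Matrix (Fin n) (Fin n) α) : Prop :=
  ∀ i j k : Fin n, i < j → j < k → M i j = 0 → M j k = 0 → M i k = 0

/-!
With letters and strands numbered from `0`, the word `σ_{l-2} ⋯ σ_{I-1} σ_{I-1} ⋯ σ_{l-2}` drags
strand `l - 1` across strands `I - 1, …, l - 2` and back, crossing each of them twice. Inductively:
conjugating a pure word by a letter `σ_k` keeps it pure, relabels its CN matrix by the
transposition of strands `k, k + 1` and adds two crossings between them, which turns the formation
with top strand `k` into the one with top strand `k + 1`.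
-/

open Matrix

section Relabel

variable {n : ℕ}

lemma finalPerm_append (π : Equiv.Perm (Fin n)) (u v : List (Fin (n - 1))) :
    finalPerm n π (u ++ v) = finalPerm n (finalPerm n π u) v := by
  induction u generalizing π with
  | nil => rfl
  | cons k u ih => exact ih _

lemma CNaux_append (π : Equiv.Perm (Fin n)) (u v : List (Fin (n - 1))) :
    CNaux n π (u ++ v) = CNaux n π u + CNaux n (finalPerm n π u) v := by
  induction u generalizing π with
  | nil => simp [CNaux, finalPerm]
  | cons k u ih => simp [CNaux, finalPerm, ih, add_assoc]

lemma finalPerm_eq_mul (π : Equiv.Perm (Fin n)) (w : List (Fin (n - 1))) :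
    finalPerm n π w = π * finalPerm n 1 w := by
  induction w generalizing π with
  | nil => rfl
  | cons k w ih => rw [finalPerm, finalPerm, ih, ih (1 * _), one_mul, mul_assoc]

lemma CNaux_eq_submatrix (π : Equiv.Perm (Fin n)) (w : List (Fin (n - 1))) :
    CNaux n π w = (CN n w).submatrix ⇑π⁻¹ ⇑π⁻¹ := by
  induction w generalizing π with
  | nil => rfl
  | cons k w ih =>
    ext i j
    simp [CN, CNaux, ih (π * _), ih (braidSwap n k), single_apply, Equiv.eq_symm_apply]

end Relabel

section Conjugation

variable {n : ℕ} {w : List (Fin (n - 1))}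

lemma IsPure.cons_append_singleton (hw : IsPure n w) (k : Fin (n - 1)) :
    IsPure n (k :: (w ++ [k])) := by
  rw [IsPure, finalPerm, finalPerm_append, one_mul, finalPerm_eq_mul _ w, hw, mul_one]
  exact Equiv.swap_mul_self _ _

lemma CN_cons_append_singleton (hw : IsPure n w) (k : Fin (n - 1)) :
    CN n (k :: (w ++ [k])) =
      2 • (single (posL n k) (posR n k) 1 + single (posR n k) (posL n k) 1) +
        (CN n w).submatrix (braidSwap n k) (braidSwap n k) := by
  have hs : (braidSwap n k)⁻¹ = braidSwap n k := Equiv.swap_inv _ _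
  rw [CN, CNaux, CNaux_append, one_mul, finalPerm_eq_mul _ w, hw, mul_one,
    CNaux_eq_submatrix _ w, hs]
  simp only [CNaux, Equiv.Perm.one_apply, braidSwap, Equiv.swap_apply_left, Equiv.swap_apply_right]
  abel

end Conjugation

/-- The word `σ_{a+c-1} ⋯ σ_{a+1} σ_a σ_a σ_{a+1} ⋯ σ_{a+c-1}`. -/
def crossingWord (n a : ℕ) : ℕ → List (Fin (n - 1))
  | 0 => []
  | c + 1 =>
    if h : a + c < n - 1 then ⟨a + c, h⟩ :: (crossingWord n a c ++ [⟨a + c, h⟩]) else []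

/-- The paper's `c(a+1, p+1)`-formation, with strands indexed from `0`. -/
def formationMatrix (n a p : ℕ) : Matrix (Fin n) (Fin n) ℕ :=
  of fun i j => if (j.val = p ∧ a ≤ i.val ∧ i.val < p) ∨ (i.val = p ∧ a ≤ j.val ∧ j.val < p)
    then 2 else 0

lemma formationMatrix_succ {n a : ℕ} (k : Fin (n - 1)) (hak : a ≤ k) :
    2 • (single (posL n k) (posR n k) 1 + single (posR n k) (posL n k) 1) +
        (formationMatrix n a k).submatrix (braidSwap n k) (braidSwap n k) =
      formationMatrix n a (k + 1) := by
  ext i j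
  simp only [formationMatrix, braidSwap, posL, posR, smul_add, smul_single, smul_eq_mul, mul_one,
    Matrix.add_apply, single_apply, Fin.ext_iff, submatrix_apply, Equiv.swap_apply_def, of_apply,
    apply_ite Fin.val, Order.lt_add_one_iff]
  split_ifs <;> omega

theorem crossingWord_spec {n : ℕ} (a c : ℕ) (h : a + c < n) :
    IsPure n (crossingWord n a c) ∧ CN n (crossingWord n a c) = formationMatrix n a (a + c) := by
  induction c with
  | zero => exact ⟨rfl, by ext i j; simp [CN, CNaux, crossingWord, formationMatrix]⟩
  | succ c ih =>
    have hk : a + c < n - 1 := by omega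
    obtain ⟨hpure, hCN⟩ := ih (by omega)
    rw [crossingWord, dif_pos hk]
    refine ⟨hpure.cons_append_singleton _, ?_⟩
    rw [CN_cons_append_singleton hpure, hCN]
    exact formationMatrix_succ ⟨a + c, hk⟩ (Nat.le_add_right a c)

theorem stmt9 (n I l : ℕ) (hI : 1 ≤ I) (hIl : I < l) (hl : l ≤ n) :
    ∃ w : List (Fin (n - 1)), IsPure n w ∧ ∀ i j : Fin n,
      CN n w i j =
        if (j.val + 1 = l ∧ I ≤ i.val + 1 ∧ i.val + 1 ≤ l - 1) ∨
           (i.val + 1 = l ∧ I ≤ j.val + 1 ∧ j.val + 1 ≤ l - 1) then 2 else 0 := by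
  obtain ⟨hpure, hCN⟩ := crossingWord_spec (n := n) (I - 1) (l - I) (by omega)
  refine ⟨_, hpure, fun i j => ?_⟩
  rw [hCN, formationMatrix, of_apply]
  exact if_congr (by omega) rfl rfl
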